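/- If c ≠ 0, then the 𝒟-module 𝒜_{a,b,c} is irreducible for all a, b ∈ ℂ. -/

import Mathlib

/-- The action of the Witt-algebra generator `d_m` on the module
`𝒜_{a,b} = ⊕_{i∈ℤ} ℂ vᵢ` (encoded as `ℤ →₀ ℂ`, with `vᵢ = single i 1`):
`d_m · vᵢ = (a + i + b m) v_{m+i}`, extended linearly. -/
noncomputable def dAct (a b : ℂ) (m : ℤ) (v : ℤ →₀ ℂ) : ℤ →₀ ℂ :=
  v.sum fun i c => Finsupp.single (m + i) ((a + (i : ℂ) + b * (m : ℂ)) * c)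

/-- The action of the generator `Y_n` of the twisted Heisenberg–Virasoro algebra `𝒟`
on `𝒜_{a,b,c}`: `Y_n · vᵢ = c v_{n+i}`, extended linearly. -/
noncomputable def yAct (c : ℂ) (n : ℤ) (v : ℤ →₀ ℂ) : ℤ →₀ ℂ :=
  v.sum fun i co => Finsupp.single (n + i) (c * co)

/-!
`d_0` acts diagonally, `d_0 vᵢ = (a + i) vᵢ`, with pairwise distinct eigenvalues, so a nonzero
invariant subspace contains a weight vector, i.e. some basis vector `vᵢ`. Since `c ≠ 0`, the
operators `c⁻¹ Y_n` carry `vᵢ` to every other basis vector `v_{n+i}`, so the subspace is everything.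
-/

open Finsupp

/-- A nonzero vector `v ∈ U` of minimal support is a multiple of a basis vector: for `i ≠ j` in
its support, `D v - w j • v ∈ U` still has `i` but not `j` in its support. -/
theorem Finsupp.exists_single_one_mem_of_diagonal_invariant {ι K : Type*} [Field K]
    {U : Submodule K (ι →₀ K)} {D : (ι →₀ K) → ι →₀ K} {w : ι → K}
    (hDU : ∀ v ∈ U, D v ∈ U) (hD : ∀ v k, D v k = w k * v k) (hw : Function.Injective w)
    (hU : U ≠ ⊥) : ∃ i, single i (1 : K) ∈ U := by
  obtain ⟨v, hvU, hv⟩ := U.exists_mem_ne_zero_of_ne_bot hU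
  induction h : v.support.card using Nat.strong_induction_on generalizing v with
  | _ n ih =>
  rcases le_or_gt n 1 with hn | hn
  · obtain ⟨i, x, hx, rfl⟩ := card_support_eq_one'.1 <|
      le_antisymm (h ▸ hn) (Finset.card_pos.2 (support_nonempty_iff.2 hv))
    exact ⟨i, by simpa [smul_single, hx] using U.smul_mem x⁻¹ hvU⟩
  obtain ⟨i, hi, j, hj, hij⟩ := Finset.one_lt_card.1 (h ▸ hn)
  set u := D v - w j • v
  have hu : ∀ k, u k = (w k - w j) * v k := fun k => by simp [u, hD]; ring
  have hui : u i ≠ 0 := hu i ▸ mul_ne_zero (sub_ne_zero.2 (hw.ne hij)) (mem_support_iff.1 hi)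
  have hsupp : u.support ⊂ v.support := by
    refine Finset.ssubset_iff_of_subset (fun k hk => ?_) |>.2 ⟨j, hj, by simp [hu]⟩
    rw [mem_support_iff, hu] at hk
    exact mem_support_iff.2 (right_ne_zero_of_mul hk)
  exact ih _ (h ▸ Finset.card_lt_card hsupp) u (U.sub_mem (hDU v hvU) (U.smul_mem _ hvU))
    (fun hu0 => hui (by simp [hu0])) rfl

theorem Finsupp.eq_top_of_forall_single_one_mem {ι R : Type*} [Semiring R]
    {U : Submodule R (ι →₀ R)} (hU : ∀ i, single i (1 : R) ∈ U) : U = ⊤ := by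
  rw [eq_top_iff, ← Finsupp.basisSingleOne.span_eq, Submodule.span_le]
  rintro _ ⟨i, rfl⟩
  simpa using hU i

theorem dAct_zero_apply (a b : ℂ) (v : ℤ →₀ ℂ) (k : ℤ) :
    dAct a b 0 v k = (a + k) * v k := by
  simp +contextual [dAct, Finsupp.sum_apply, single_apply]

theorem yAct_single (c : ℂ) (n i : ℤ) (x : ℂ) :
    yAct c n (single i x) = single (n + i) (c * x) := by
  simp [yAct]

/-- if `c ≠ 0`, the `𝒟`-module `𝒜_{a,b,c}` is irreducible for all
`a, b ∈ ℂ`: every subspace invariant under all `d_m` and `Y_n` is `⊥` or `⊤`. -/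
theorem Aabc_irreducible (a b c : ℂ) (hc : c ≠ 0) :
    ∀ U : Submodule ℂ (ℤ →₀ ℂ),
      ((∀ m : ℤ, ∀ v ∈ U, dAct a b m v ∈ U) ∧ (∀ n : ℤ, ∀ v ∈ U, yAct c n v ∈ U)) →
      U = ⊥ ∨ U = ⊤ := by
  rintro U ⟨hd, hy⟩
  refine or_iff_not_imp_left.2 fun hU => ?_
  obtain ⟨i, hi⟩ := exists_single_one_mem_of_diagonal_invariant (hd 0) (dAct_zero_apply a b)
    ((add_right_injective a).comp Int.cast_injective) hU
  refine eq_top_of_forall_single_one_mem fun j => ?_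
  simpa [yAct_single, smul_single, hc] using U.smul_mem c⁻¹ (hy (j - i) _ hi)
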